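/- arXiv:2204.09576 — 4 statements merged into one kernel-verified Lean document; each statement's English description precedes it below -/
import Mathlib

section
/- Matrix mutation preserves the rank: for any (n+m)×n integer matrix B̃ whose top n×n submatrix is skew-symmetrizable and any k ∈ {1,…,n}, the rank of μ_k(B̃) (as a matrix over ℚ) equals the rank of B̃. -/
/-!
The mutation at `k` factors as `μ_k(B̃) = E * B̃ * F` (Berenstein–Fomin–Zelevinsky), where
`E = 1 + w eₖᵀ` and `F = 1 + eₖ uᵀ` are rank-one perturbations of the identity with
`w = (max (b_{ik}) 0)ᵢ` and `u = (max (-b_{kj}) 0)ⱼ`, except that their `k`-th entries are `-2`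
(this flips the sign of row and column `k`). The identity holds as soon as `b_{kk} = 0`, which
follows from skew-symmetrizability, by the pointwise case split
`sgn a · max (a b) 0 = max a 0 · b + a · max (-b) 0`. By the matrix determinant lemma
`det E = det F = 1 + (-2) = -1`, so `E` and `F` stay invertible over `ℚ` and the rank is unchanged.
-/

/-- Mutation of an `(n+m) × n` integer matrix at direction `k`. -/
def mutate (n m : ℕ) (B : Matrix (Fin (n + m)) (Fin n) ℤ) (k : Fin n) :
    Matrix (Fin (n + m)) (Fin n) ℤ :=
  fun i j =>
    if i = Fin.castAdd m k ∨ j = k then -B i j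
    else B i j + Int.sign (B i k) * max (B i k * B (Fin.castAdd m k) j) 0

/-- A square integer matrix is skew-symmetrizable if there is a diagonal matrix with
positive integer entries `S` such that `S * B` is skew-symmetric. -/
def IsSkewSymmetrizable (n : ℕ) (B : Matrix (Fin n) (Fin n) ℤ) : Prop :=
  ∃ S : Fin n → ℤ, (∀ i, 0 < S i) ∧ ∀ i j, S i * B i j = -(S j * B j i)

open Matrix

lemma Int.sign_mul_max_mul_eq (a b : ℤ) :
    a.sign * max (a * b) 0 = max a 0 * b + a * max (-b) 0 := by
  rcases lt_trichotomy a 0 with ha | rfl | ha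
  · rw [Int.sign_eq_neg_one_of_neg ha]
    simp only [max_def]
    split_ifs <;> nlinarith
  · simp
  · rw [Int.sign_eq_one_of_pos ha]
    simp only [max_def]
    split_ifs <;> nlinarith

lemma IsSkewSymmetrizable.apply_self_eq_zero {n : ℕ} {B : Matrix (Fin n) (Fin n) ℤ}
    (h : IsSkewSymmetrizable n B) (i : Fin n) : B i i = 0 := by
  obtain ⟨S, hSpos, hS⟩ := h
  have : S i * B i i = 0 := by linarith [hS i i]
  exact (mul_eq_zero.mp this).resolve_left (hSpos i).ne'

namespace Matrix

variable {l m R K : Type*} [Fintype l] [DecidableEq l] [Fintype m] [DecidableEq m] [CommRing R]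

theorem det_one_add_vecMulVec (w v : m → R) : (1 + vecMulVec w v).det = 1 + v ⬝ᵥ w := by
  rw [vecMulVec_eq Unit, det_one_add_replicateCol_mul_replicateRow]

theorem one_add_vecMulVec_single_mul_mul_apply (w : l → R) (p : l) (A : Matrix l m R) (q : m)
    (u : m → R) (i : l) (j : m) :
    ((1 + vecMulVec w (Pi.single p 1) : Matrix l l R) * A *
        (1 + vecMulVec (Pi.single q 1) u : Matrix m m R)) i j =
      A i j + w i * A p j + (A i q + w i * A p q) * u j := by
  rw [Matrix.add_mul, Matrix.one_mul, vecMulVec_mul, single_one_vecMul, Matrix.mul_add,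
    Matrix.mul_one, mul_vecMulVec, mulVec_single_one]
  simp [vecMulVec_apply]

theorem rank_map_mul_mul_of_isUnit_det [CommRing K] (f : R →+* K) (P : Matrix l l R)
    (A : Matrix l m R) (Q : Matrix m m R) (hP : IsUnit P.det) (hQ : IsUnit Q.det) :
    ((P * A * Q).map f).rank = (A.map f).rank := by
  rw [Matrix.map_mul, Matrix.map_mul, rank_mul_eq_left_of_isUnit_det,
    rank_mul_eq_right_of_isUnit_det]
  · simpa [RingHom.map_det] using hP.map f
  · simpa [RingHom.map_det] using hQ.map f

end Matrix

section Factorization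

variable {n m : ℕ} (B : Matrix (Fin (n + m)) (Fin n) ℤ) (k : Fin n)

def mutationLeftFactor : Matrix (Fin (n + m)) (Fin (n + m)) ℤ :=
  1 + vecMulVec (fun i => if i = Fin.castAdd m k then -2 else max (B i k) 0)
    (Pi.single (Fin.castAdd m k) 1)

def mutationRightFactor : Matrix (Fin n) (Fin n) ℤ :=
  1 + vecMulVec (Pi.single k 1) (fun j => if j = k then -2 else max (-B (Fin.castAdd m k) j) 0)

theorem det_mutationLeftFactor : (mutationLeftFactor B k).det = -1 := by
  rw [mutationLeftFactor, det_one_add_vecMulVec, single_one_dotProduct, if_pos rfl]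
  norm_num

theorem det_mutationRightFactor : (mutationRightFactor B k).det = -1 := by
  rw [mutationRightFactor, det_one_add_vecMulVec, dotProduct_single_one, if_pos rfl]
  norm_num

theorem mutate_eq_mutationLeftFactor_mul_mul (hkk : B (Fin.castAdd m k) k = 0) :
    mutate n m B k = mutationLeftFactor B k * B * mutationRightFactor B k := by
  ext i j
  rw [mutationLeftFactor, mutationRightFactor, one_add_vecMulVec_single_mul_mul_apply, hkk,
    mutate]
  by_cases hi : i = Fin.castAdd m k
  · subst hi
    simp only [true_or, if_true, hkk]
    ring
  by_cases hj : j = k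
  · subst hj
    simp only [hi, or_true, if_true, if_false, hkk]
    ring
  simp only [hi, hj, or_self, if_false, Int.sign_mul_max_mul_eq]
  ring

end Factorization

theorem mutate_rank (n m : ℕ) (B : Matrix (Fin (n + m)) (Fin n) ℤ) (k : Fin n)
    (h : IsSkewSymmetrizable n (fun i j => B (Fin.castAdd m i) j)) :
    ((mutate n m B k).map (Int.cast : ℤ → ℚ)).rank = (B.map (Int.cast : ℤ → ℚ)).rank := by
  rw [mutate_eq_mutationLeftFactor_mul_mul B k (h.apply_self_eq_zero k)]
  apply rank_map_mul_mul_of_isUnit_det (Int.castRingHom ℚ)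
  · rw [det_mutationLeftFactor]
    exact isUnit_one.neg
  · rw [det_mutationRightFactor]
    exact isUnit_one.neg
end

section
/- Matrix mutation preserves column primitivity: if every column of the (n+m)×n integer matrix B̃ (with skew-symmetrizable top n×n submatrix) is a primitive integer vector, then every column of μ_k(B̃) is a primitive integer vector, for any k ∈ {1,…,n}. -/
/-!
Within column `j`, mutation at `k` negates the pivot entry `c = B k j` and changes every other
entry either by a sign or by a multiple of `c`. Hence the mutated column and the original one
have the same common divisors, so mutation preserves the gcd of every column.
-/

theorem Finset.gcd_eq_gcd_of_forall_dvd_iff {ι α : Type*} [CommMonoidWithZero α]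
    [NormalizedGCDMonoid α] {s : Finset ι} {f g : ι → α}
    (h : ∀ d, (∀ i ∈ s, d ∣ f i) ↔ ∀ i ∈ s, d ∣ g i) : s.gcd f = s.gcd g :=
  dvd_antisymm_of_normalize_eq Finset.normalize_gcd Finset.normalize_gcd
    (Finset.dvd_gcd_iff.mpr ((h _).mp (Finset.dvd_gcd_iff.mp dvd_rfl)))
    (Finset.dvd_gcd_iff.mpr ((h _).mpr (Finset.dvd_gcd_iff.mp dvd_rfl)))

theorem dvd_max_of_dvd {α : Type*} [Dvd α] [LinearOrder α] {a b d : α}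
    (ha : d ∣ a) (hb : d ∣ b) : d ∣ max a b := by
  rcases max_choice a b with h | h <;> rw [h] <;> assumption

section Mutation

variable {n m : ℕ} (B : Matrix (Fin (n + m)) (Fin n) ℤ) (k : Fin n)

theorem mutate_castAdd_self (j : Fin n) :
    mutate n m B k (Fin.castAdd m k) j = -B (Fin.castAdd m k) j :=
  if_pos (Or.inl rfl)

theorem dvd_mutate_iff {d : ℤ} {j : Fin n} (hd : d ∣ B (Fin.castAdd m k) j) (i : Fin (n + m)) :
    d ∣ mutate n m B k i j ↔ d ∣ B i j := by
  unfold mutate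
  split_ifs
  · exact dvd_neg
  · exact dvd_add_left <| (dvd_max_of_dvd (hd.mul_left _) (dvd_zero d)).mul_left _

theorem gcd_mutate_col (j : Fin n) :
    Finset.univ.gcd (fun i => mutate n m B k i j) = Finset.univ.gcd (fun i => B i j) := by
  refine Finset.gcd_eq_gcd_of_forall_dvd_iff fun d => ?_
  simp only [Finset.mem_univ, forall_const]
  constructor
  · intro hmut
    have hpivot : d ∣ B (Fin.castAdd m k) j := by
      simpa only [mutate_castAdd_self, dvd_neg] using hmut (Fin.castAdd m k)
    exact fun i => (dvd_mutate_iff B k hpivot i).mp (hmut i)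
  · intro hB i
    exact (dvd_mutate_iff B k (hB _) i).mpr (hB i)

end Mutation

theorem mutate_primitive_general (n m : ℕ) (B : Matrix (Fin (n + m)) (Fin n) ℤ) (k : Fin n)
    (hprim : ∀ j : Fin n, Finset.univ.gcd (fun i => B i j) = 1) :
    ∀ j : Fin n, Finset.univ.gcd (fun i => mutate n m B k i j) = 1 := fun j =>
  (gcd_mutate_col B k j).trans (hprim j)

theorem mutate_primitive (n m : ℕ) (B : Matrix (Fin (n + m)) (Fin n) ℤ) (k : Fin n)
    (h : IsSkewSymmetrizable n (fun i j => B (Fin.castAdd m i) j))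
    (hprim : ∀ j : Fin n, Finset.univ.gcd (fun i => B i j) = 1) :
    ∀ j : Fin n, Finset.univ.gcd (fun i => mutate n m B k i j) = 1 :=
  mutate_primitive_general n m B k hprim
end

section
/- Irreducibility of primitive binomials with disjoint support: let K be a field and let a = (a_1,…,a_n), b = (b_1,…,b_n) be vectors of non-negative integers with disjoint supports (a_i·b_i = 0 for all i) such that gcd(a_1,…,a_n,b_1,…,b_n) = 1 and (a,b) ≠ 0. Then the binomial ∏_i x_i^{a_i} + ∏_i x_i^{b_i} is irreducible in the polynomial ring K[x_1,…,x_n]. -/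
/-!
Some exponent, say `a ℓ`, is odd, since otherwise `2` would divide all exponents. As a polynomial
in `x_ℓ` over `R = K[x_k : k ≠ ℓ]` the binomial is `x_ℓ ^ m * A + B` with `m = a ℓ` odd and `A`, `B`
coprime monomials, so it is primitive and, by Gauss's lemma, irreducible as soon as
`x_ℓ ^ m + B / A` is irreducible over `Frac R`. By Capelli's criterion for odd `m` this fails only
if `-B / A = t ^ p` for a prime `p ∣ m`; writing `t = u / v` and comparing degrees in each `x_k`
in `u ^ p * A = -(v ^ p * B)` gives `p ∣ b k - a k`, hence `p ∣ a k` and `p ∣ b k` by disjointness,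
contradicting the gcd condition.
-/

open MvPolynomial

theorem Nat.dvd_of_intCast_dvd_sub_of_mul_eq_zero {p x y : ℕ} (hxy : x * y = 0)
    (h : (p : ℤ) ∣ y - x) : p ∣ x ∧ p ∣ y := by
  rcases Nat.mul_eq_zero.mp hxy with rfl | rfl
  · exact ⟨dvd_zero p, by exact_mod_cast (by simpa using h : (p : ℤ) ∣ y)⟩
  · exact ⟨by exact_mod_cast (by simpa using h : (p : ℤ) ∣ x), dvd_zero p⟩

namespace Polynomial

variable {R : Type*} [CommRing R]

theorem isPrimitive_X_pow_mul_C_add_C {m : ℕ} (hm : m ≠ 0) {A B : R} (hAB : IsRelPrime A B) :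
    (X ^ m * C A + C B).IsPrimitive := by
  refine isPrimitive_iff_isUnit_of_C_dvd.mpr fun r hr => hAB ?_ ?_
  · simpa [coeff_C, hm] using (C_dvd_iff_dvd_coeff r _).mp hr m
  · simpa [coeff_X_pow, Ne.symm hm] using (C_dvd_iff_dvd_coeff r _).mp hr 0

variable [IsDomain R] [IsGCDMonoid R]

theorem irreducible_X_pow_mul_C_add_C {m : ℕ} (hm : Odd m) {A B : R} (hA : A ≠ 0)
    (hAB : IsRelPrime A B)
    (hpow : ∀ p : ℕ, p.Prime → p ∣ m → ∀ u v : R, v ≠ 0 → u ^ p * A ≠ -(v ^ p * B)) :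
    Irreducible (X ^ m * C A + C B) := by
  let F := FractionRing R
  let i := algebraMap R F
  have hinj : Function.Injective i := IsFractionRing.injective R F
  have hiA : i A ≠ 0 := (map_ne_zero_iff i hinj).mpr hA
  rw [(isPrimitive_X_pow_mul_C_add_C hm.pos.ne' hAB).irreducible_iff_irreducible_map_fraction_map
    (K := F)]
  have hmap : (X ^ m * C A + C B).map i = C (i A) * (X ^ m - C (-(i B / i A))) := by
    simp only [Polynomial.map_add, Polynomial.map_mul, Polynomial.map_pow, map_X, map_C]
    rw [mul_sub, ← C_mul, mul_neg, mul_div_cancel₀ _ hiA, C_neg, sub_neg_eq_add, mul_comm]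
  rw [hmap, irreducible_isUnit_mul (isUnit_C.mpr (isUnit_iff_ne_zero.mpr hiA))]
  refine X_pow_sub_C_irreducible_of_odd hm fun p hp hpm t ht => ?_
  obtain ⟨u, v, hv, rfl⟩ := IsFractionRing.div_surjective R t
  have hiv : i v ≠ 0 := (map_ne_zero_iff i hinj).mpr (nonZeroDivisors.ne_zero hv)
  refine hpow p hp hpm u v (nonZeroDivisors.ne_zero hv) (hinj ?_)
  rw [div_pow, div_eq_iff (pow_ne_zero _ hiv)] at ht
  simp only [map_mul, map_pow, map_neg]
  change i u ^ p = _ at ht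
  rw [ht, neg_mul, neg_mul, div_mul_eq_mul_div, div_mul_cancel₀ _ hiA, mul_comm]

end Polynomial

namespace MvPolynomial

section Monomials

variable {σ R : Type*} [Fintype σ] [CommRing R] [IsDomain R]

theorem prod_X_pow_ne_zero (c : σ → ℕ) : (∏ i, X i ^ c i : MvPolynomial σ R) ≠ 0 :=
  Finset.prod_ne_zero_iff.mpr fun i _ => pow_ne_zero _ (X_ne_zero i)

theorem degreeOf_prod_X_pow [DecidableEq σ] (c : σ → ℕ) (s : σ) :
    degreeOf s (∏ i, X i ^ c i : MvPolynomial σ R) = c s := by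
  rw [degreeOf_prod_eq _ _ fun i _ => pow_ne_zero _ (X_ne_zero i),
    Finset.sum_eq_single s (fun i _ hi => degreeOf_X_pow_of_ne _ hi.symm) (by simp)]
  exact degreeOf_X_self_pow s (c s)

theorem isRelPrime_prod_X_pow [UniqueFactorizationMonoid R] (a b : σ → ℕ)
    (hdisj : ∀ i, a i * b i = 0) :
    IsRelPrime (∏ i, X i ^ a i : MvPolynomial σ R) (∏ i, X i ^ b i) := by
  refine IsRelPrime.prod_left fun i _ => IsRelPrime.prod_right fun j _ => ?_
  obtain hi | hi := eq_or_ne (a i) 0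
  · simp [hi, isRelPrime_one_left]
  obtain hj | hj := eq_or_ne (b j) 0
  · simp [hj, isRelPrime_one_right]
  have hij : i ≠ j := by rintro rfl; exact (mul_ne_zero hi hj) (hdisj i)
  exact ((X_prime.irreducible.isRelPrime_iff_not_dvd).mpr (by simpa using hij)).pow

theorem intCast_dvd_sub_of_pow_mul_prod_X_pow_eq {p : ℕ} (hp : p ≠ 0) {u v : MvPolynomial σ R}
    (hv : v ≠ 0) {a b : σ → ℕ} (h : u ^ p * ∏ i, X i ^ a i = -(v ^ p * ∏ i, X i ^ b i)) (s : σ) :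
    (p : ℤ) ∣ b s - a s := by
  classical
  have hu : u ≠ 0 := by
    rintro rfl
    rw [zero_pow hp, zero_mul, eq_comm, neg_eq_zero] at h
    exact mul_ne_zero (pow_ne_zero _ hv) (prod_X_pow_ne_zero b) h
  have hdeg := congrArg (degreeOf s) h
  rw [degreeOf_neg, degreeOf_mul_eq (pow_ne_zero _ hu) (prod_X_pow_ne_zero a),
    degreeOf_mul_eq (pow_ne_zero _ hv) (prod_X_pow_ne_zero b), degreeOf_pow_eq _ _ _ hu,
    degreeOf_pow_eq _ _ _ hv, degreeOf_prod_X_pow, degreeOf_prod_X_pow] at hdeg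
  exact ⟨degreeOf s u - degreeOf s v, by zify at hdeg; linear_combination -hdeg⟩

end Monomials

section Pivot

variable {σ R : Type*} [CommRing R] [DecidableEq σ]

noncomputable def equivPolynomialSubtypeNe (ℓ : σ) :
    MvPolynomial σ R ≃ₐ[R] Polynomial (MvPolynomial {k // k ≠ ℓ} R) :=
  (renameEquiv R (Equiv.optionSubtypeNe ℓ).symm).trans (optionEquivLeft R {k // k ≠ ℓ})

theorem equivPolynomialSubtypeNe_X_self (ℓ : σ) :
    equivPolynomialSubtypeNe ℓ (X ℓ : MvPolynomial σ R) = Polynomial.X := by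
  simp [equivPolynomialSubtypeNe, optionEquivLeft_X_none]

theorem equivPolynomialSubtypeNe_X_of_ne (ℓ : σ) (k : {k // k ≠ ℓ}) :
    equivPolynomialSubtypeNe ℓ (X k : MvPolynomial σ R) = Polynomial.C (X k) := by
  simp [equivPolynomialSubtypeNe, Equiv.optionSubtypeNe_symm_of_ne k.2, optionEquivLeft_X_some]

theorem equivPolynomialSubtypeNe_prod_X_pow [Fintype σ] (ℓ : σ) (c : σ → ℕ) :
    equivPolynomialSubtypeNe ℓ (∏ i, X i ^ c i : MvPolynomial σ R) =
      Polynomial.X ^ c ℓ * Polynomial.C (∏ k : {k // k ≠ ℓ}, X k ^ c k) := by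
  rw [← (Equiv.optionSubtypeNe ℓ).prod_comp, Fintype.prod_option]
  simp [equivPolynomialSubtypeNe_X_self, equivPolynomialSubtypeNe_X_of_ne]

end Pivot

variable {σ R : Type*} [Fintype σ] [DecidableEq σ] [CommRing R] [IsDomain R]
  [UniqueFactorizationMonoid R]

theorem irreducible_prod_X_pow_add_prod_X_pow_of_odd {a b : σ → ℕ} (hdisj : ∀ i, a i * b i = 0)
    (hcop : ∀ d : ℕ, (∀ i, d ∣ a i) → (∀ i, d ∣ b i) → d = 1) {ℓ : σ} (hodd : Odd (a ℓ)) :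
    Irreducible (∏ i, X i ^ a i + ∏ i, X i ^ b i : MvPolynomial σ R) := by
  have hbℓ : b ℓ = 0 := (Nat.mul_eq_zero.mp (hdisj ℓ)).resolve_left hodd.pos.ne'
  rw [← MulEquiv.irreducible_iff (equivPolynomialSubtypeNe ℓ), map_add,
    equivPolynomialSubtypeNe_prod_X_pow, equivPolynomialSubtypeNe_prod_X_pow, hbℓ, pow_zero,
    one_mul]
  refine Polynomial.irreducible_X_pow_mul_C_add_C hodd (prod_X_pow_ne_zero _)
    (isRelPrime_prod_X_pow _ _ fun k => hdisj k) fun p hp hpℓ u v hv h => hp.ne_one ?_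
  have hdvd : ∀ i, p ∣ a i ∧ p ∣ b i := by
    intro i
    by_cases hi : i = ℓ
    · subst hi
      exact ⟨hpℓ, hbℓ ▸ dvd_zero p⟩
    · exact Nat.dvd_of_intCast_dvd_sub_of_mul_eq_zero (hdisj i)
        (intCast_dvd_sub_of_pow_mul_prod_X_pow_eq hp.ne_zero hv h ⟨i, hi⟩)
  exact hcop p (fun i => (hdvd i).1) (fun i => (hdvd i).2)

theorem irreducible_prod_X_pow_add_prod_X_pow {a b : σ → ℕ} (hdisj : ∀ i, a i * b i = 0)
    (hcop : ∀ d : ℕ, (∀ i, d ∣ a i) → (∀ i, d ∣ b i) → d = 1) :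
    Irreducible (∏ i, X i ^ a i + ∏ i, X i ^ b i : MvPolynomial σ R) := by
  obtain ⟨ℓ, hodd | hodd⟩ : ∃ ℓ, Odd (a ℓ) ∨ Odd (b ℓ) := by
    by_contra! hev
    have h2 := hcop 2 (fun i => (Nat.not_odd_iff_even.mp (hev i).1).two_dvd)
      (fun i => (Nat.not_odd_iff_even.mp (hev i).2).two_dvd)
    omega
  · exact irreducible_prod_X_pow_add_prod_X_pow_of_odd hdisj hcop hodd
  · rw [add_comm]
    exact irreducible_prod_X_pow_add_prod_X_pow_of_odd (fun i => by rw [mul_comm, hdisj i])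
      (fun d hb ha => hcop d ha hb) hodd

end MvPolynomial

theorem binomial_irreducible_general (K : Type*) [Field K] (n : ℕ) (a b : Fin n → ℕ)
    (hdisj : ∀ i, a i * b i = 0)
    (hgcd : Nat.gcd (Finset.univ.gcd a) (Finset.univ.gcd b) = 1) :
    Irreducible ((∏ i, X i ^ a i) + (∏ i, X i ^ b i) : MvPolynomial (Fin n) K) :=
  irreducible_prod_X_pow_add_prod_X_pow hdisj fun _ ha hb => Nat.dvd_one.mp <|
    hgcd ▸ Nat.dvd_gcd (Finset.dvd_gcd fun i _ => ha i) (Finset.dvd_gcd fun i _ => hb i)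

theorem binomial_irreducible (K : Type*) [Field K] (n : ℕ) (a b : Fin n → ℕ)
    (hdisj : ∀ i, a i * b i = 0)
    (hgcd : Nat.gcd (Finset.univ.gcd a) (Finset.univ.gcd b) = 1)
    (hne : ¬(a = 0 ∧ b = 0)) :
    Irreducible ((∏ i, X i ^ a i) + (∏ i, X i ^ b i) : MvPolynomial (Fin n) K) :=
  binomial_irreducible_general K n a b hdisj hgcd
end

section
/- The units of a multivariate Laurent polynomial ring over a field are exactly the nonzero scalar multiples of Laurent monomials: an element f of K[x_1^{±1},…,x_n^{±1}] is a unit if and only if f = λ·x_1^{c_1}⋯x_n^{c_n} for some λ ∈ K^× and integers c_1,…,c_n. -/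
/-!
If `f * g = 1` and `f` is not a monomial, then `ℤⁿ`, being a linearly ordered group, has the
two-unique-sums property: some two distinct pairs of exponents from the supports of `f` and `g`
are the only ones producing their sums. Those sums are distinct and carry the nonzero coefficients
`f a * g b`, so `f * g` has at least two monomials, which `1` does not. Hence `f = r • x^c`, and
`r` is a unit because collapsing `ℤⁿ` to a point is a ring homomorphism `K[ℤⁿ] → K`.
-/

open Finset

namespace AddMonoidAlgebra

variable {R A : Type*} [Semiring R]

theorem one_lt_card_support_coeff_mul [NoZeroDivisors R] [Add A] [TwoUniqueSums A]
    {f g : R[A]} (h : 1 < #f.coeff.support * #g.coeff.support) :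
    1 < #(f * g).coeff.support := by
  obtain ⟨p, hp, q, hq, hpq, hup, huq⟩ := TwoUniqueSums.uniqueAdd_of_one_lt_card h
  rw [mem_product] at hp hq
  have mem_support {a b : A} (ha : a ∈ f.coeff.support) (hb : b ∈ g.coeff.support)
      (hu : UniqueAdd f.coeff.support g.coeff.support a b) : a + b ∈ (f * g).coeff.support := by
    rw [Finsupp.mem_support_iff, coeff_mul_add_of_uniqueAdd hu]
    exact mul_ne_zero (Finsupp.mem_support_iff.1 ha) (Finsupp.mem_support_iff.1 hb)
  refine one_lt_card.2 ⟨_, mem_support hp.1 hp.2 hup, _, mem_support hq.1 hq.2 huq, fun he => ?_⟩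
  obtain ⟨h1, h2⟩ := hup hq.1 hq.2 he.symm
  exact hpq (Prod.ext h1.symm h2.symm)

theorem isUnit_of_isUnit_single [AddMonoid A] {a : A} {r : R} (h : IsUnit (single a r)) :
    IsUnit r := by
  simpa using h.map ((uniqueRingEquiv Unit).toRingHom.comp (mapDomainRingHom R (0 : A →+ Unit)))

theorem isUnit_single [AddGroup A] (a : A) (u : Rˣ) : IsUnit (single a (u : R)) :=
  ⟨⟨single a u, single (-a) ↑u⁻¹, by simp [single_mul_single, one_def],
    by simp [single_mul_single, one_def]⟩, rfl⟩

theorem isUnit_iff_exists_single [NoZeroDivisors R] [AddGroup A] [TwoUniqueSums A] (f : R[A]) :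
    IsUnit f ↔ ∃ (u : Rˣ) (a : A), f = single a (u : R) := by
  refine ⟨fun hf => ?_, fun ⟨u, a, hf⟩ => hf ▸ isUnit_single a u⟩
  nontriviality R
  obtain ⟨g, hfg⟩ := hf.exists_right_inv
  have hf0 : f ≠ 0 := by rintro rfl; simp at hfg
  have hg0 : g ≠ 0 := by rintro rfl; simp at hfg
  have hcard_le : #f.coeff.support * #g.coeff.support ≤ 1 := by
    by_contra! h
    simpa [hfg, support_coeff_one] using one_lt_card_support_coeff_mul h
  have hcard_pos {p : R[A]} (hp : p ≠ 0) : 0 < #p.coeff.support :=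
    card_pos.2 (Finsupp.support_nonempty_iff.2 (mt coeff_eq_zero.1 hp))
  obtain ⟨a, r, -, hr⟩ := Finsupp.card_support_eq_one'.1
    (eq_one_of_mul_le_one_left (hcard_pos hf0) (hcard_pos hg0) hcard_le)
  obtain rfl : f = single a r := coeff_injective (hr.trans (coeff_single a r).symm)
  exact ⟨(isUnit_of_isUnit_single hf).unit, a, rfl⟩

end AddMonoidAlgebra

theorem laurent_units (K : Type*) [Field K] (n : ℕ)
    (f : AddMonoidAlgebra K (Fin n → ℤ)) :
    IsUnit f ↔ ∃ (lam : Kˣ) (c : Fin n → ℤ),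
      f = AddMonoidAlgebra.single c (lam : K) :=
  AddMonoidAlgebra.isUnit_iff_exists_single f
end
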